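/- Let G : [0,∞) → 𝕂ⁿ be continuous with G(0) = 0, and let D : [0,∞) → M_n(𝕂) be a locally Lebesgue integrable function with X^L(t) = I + ∫_0^t D(s) ds for all t ≥ 0 (such D exists). Define x : [-r,∞) → 𝕂ⁿ by x = 0 on [-r,0) and x(t) = G(t) + ∫_0^t D(t-u) G(u) du for t ≥ 0. Then x is continuous on [0,∞) and x(t) = L(∫_0^t x_s ds) + G(t) for all t ≥ 0; that is, x is the unique solution with zero initial datum of the integral equation with forcing term G. -/

import Mathlib

open MeasureTheory
open Set Topology Filter

/-- `X` is the principal fundamental matrix solution of `ẋ(t) = L x_t`: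
`X = O` on `[-r,0)`, `X` continuous on `[0,∞)`, `X(0) = I`, and for every `ξ` and
`t ≥ 0`, `X(t)ξ = ξ + L(θ ↦ ∫_0^{max(t+θ,0)} X(s)ξ ds)`. -/
def IsPFMS {𝕜 : Type*} [RCLike 𝕜] {n : ℕ} (r : ℝ)
    (L : C(Set.Icc (-r) (0:ℝ), Fin n → 𝕜) →L[𝕜] (Fin n → 𝕜))
    (X : ℝ → ((Fin n → 𝕜) →L[𝕜] (Fin n → 𝕜))) : Prop :=
  (∀ t ∈ Set.Ico (-r) (0:ℝ), X t = 0) ∧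
  ContinuousOn X (Set.Ici (0:ℝ)) ∧ X 0 = 1 ∧
  ∀ ξ : Fin n → 𝕜, ∀ t, 0 ≤ t → ∃ ψ : C(Set.Icc (-r) (0:ℝ), Fin n → 𝕜),
    (∀ θ : Set.Icc (-r) (0:ℝ), ψ θ = ∫ s in (0:ℝ)..(max (t + (θ : ℝ)) 0), X s ξ) ∧
    X t ξ = ξ + L ψ

/-- `IsSolForced r L φ ξ G x` : `x` solves `x(t) = ξ + L(∫_0^t x_s ds) + G(t)` for
`t ≥ 0`, with history `φ` on `[-r,0)` and value `ξ` at `0`. -/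
def IsSolForced {𝕜 : Type*} [RCLike 𝕜] {n : ℕ} (r : ℝ)
    (L : C(Set.Icc (-r) (0:ℝ), Fin n → 𝕜) →L[𝕜] (Fin n → 𝕜))
    (φ : ℝ → Fin n → 𝕜) (ξ : Fin n → 𝕜) (G : ℝ → Fin n → 𝕜)
    (x : ℝ → Fin n → 𝕜) : Prop :=
  (∀ θ ∈ Set.Ico (-r) (0:ℝ), x θ = φ θ) ∧ x 0 = ξ ∧
  ContinuousOn x (Set.Ici (0:ℝ)) ∧
  ∀ t, 0 ≤ t → ∃ ψ : C(Set.Icc (-r) (0:ℝ), Fin n → 𝕜),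
    (∀ θ : Set.Icc (-r) (0:ℝ), ψ θ = ∫ s in (θ : ℝ)..(t + (θ : ℝ)), x s) ∧
    x t = ξ + L ψ + G t

section Aux
variable {𝕜 : Type*} [RCLike 𝕜] {E : Type*} [NormedAddCommGroup E] [NormedSpace 𝕜 E]
  [NormedSpace ℝ E] [IsScalarTower ℝ 𝕜 E] [CompleteSpace E]

lemma kint {W : Type*} [NormedAddCommGroup W] (K : ℝ → W) (hK0 : ∀ s : ℝ, s < 0 → K s = 0)
    (hKi : ∀ b : ℝ, IntegrableOn K (Set.Icc 0 b)) (a b : ℝ) :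
    IntervalIntegrable K volume a b := by
  rw [intervalIntegrable_iff]
  have h1 : IntegrableOn K (Set.uIoc a b ∩ Set.Ici 0) :=
    (hKi (max a b)).mono_set (fun s hs => ⟨hs.2, hs.1.2⟩)
  have h2 : IntegrableOn K (Set.uIoc a b ∩ Set.Iio 0) := by
    have : IntegrableOn (fun _ : ℝ => (0 : W)) (Set.uIoc a b ∩ Set.Iio 0) :=
      integrableOn_zero
    exact this.congr_fun (fun s hs => (hK0 s hs.2).symm)
      (measurableSet_uIoc.inter measurableSet_Iio)
  have h := h1.union h2
  refine h.mono_set (fun s hs => ?_)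
  rcases lt_or_ge s 0 with h0 | h0
  · exact Or.inr ⟨hs, h0⟩
  · exact Or.inl ⟨hs, h0⟩

lemma fub (K : ℝ → E →L[𝕜] E) (hKm : StronglyMeasurable K)
    (hK0 : ∀ s : ℝ, s < 0 → K s = 0)
    (hKi : ∀ b : ℝ, IntegrableOn K (Set.Icc 0 b))
    (g : ℝ → E) (hg : Continuous g) {τ : ℝ} (hτ : 0 ≤ τ) :
    ∫ s in (0:ℝ)..τ, (∫ u in (0:ℝ)..s, K (s - u) (g u)) =
      ∫ u in (0:ℝ)..τ, (∫ s in (0:ℝ)..(τ - u), K s) (g u) := by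
  obtain ⟨C, hC⟩ : ∃ C, ∀ v ∈ Set.Icc (0:ℝ) τ, ‖g v‖ ≤ C :=
    isCompact_Icc.exists_bound_of_continuousOn hg.continuousOn
  have hC0 : 0 ≤ C := le_trans (norm_nonneg _) (hC 0 ⟨le_rfl, hτ⟩)
  set μ := volume.restrict (Set.Ioc (0:ℝ) τ) with hμ
  -- measurability
  have hsm : ∀ s : ℝ, StronglyMeasurable (fun u => K (s - u) (g u)) := fun s =>
    isBoundedBilinearMap_apply.continuous.comp_stronglyMeasurable
      ((hKm.comp_measurable (measurable_const.sub measurable_id)).prodMk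
        hg.stronglyMeasurable)
  have hFm : StronglyMeasurable (fun p : ℝ × ℝ => K (p.1 - p.2) (g p.2)) :=
    isBoundedBilinearMap_apply.continuous.comp_stronglyMeasurable
      ((hKm.comp_measurable (measurable_fst.sub measurable_snd)).prodMk
        (hg.stronglyMeasurable.comp_measurable measurable_snd))
  -- slice integrability
  have hKs : ∀ s : ℝ, IntervalIntegrable (fun u => K (s - u)) volume 0 τ := by
    intro s
    have := (kint K hK0 hKi s (s - τ)).comp_sub_left s
    simpa using this
  have hslice : ∀ s : ℝ, Integrable (fun u => K (s - u) (g u)) μ := by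
    intro s
    have hdom : Integrable (fun u => C * ‖K (s - u)‖) μ := by
      have := ((hKs s).norm.const_mul C)
      rwa [intervalIntegrable_iff, Set.uIoc_of_le hτ] at this
    refine hdom.mono' (hsm s).aestronglyMeasurable ?_
    refine (ae_restrict_iff' measurableSet_Ioc).2 (Filter.Eventually.of_forall fun u hu => ?_)
    calc ‖K (s - u) (g u)‖ ≤ ‖K (s - u)‖ * ‖g u‖ := (K (s - u)).le_opNorm _
    _ ≤ ‖K (s - u)‖ * C := by
        exact mul_le_mul_of_nonneg_left (hC u ⟨hu.1.le, hu.2⟩) (norm_nonneg _)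
    _ = C * ‖K (s - u)‖ := mul_comm _ _
  -- bound for the iterated norm integral
  set B := ∫ v in (-τ)..τ, ‖K v‖ with hB
  have hKnormint : ∀ a b : ℝ, IntervalIntegrable (fun v => ‖K v‖) volume a b :=
    fun a b => (kint K hK0 hKi a b).norm
  have hnormbd : ∀ s ∈ Set.Ioc (0:ℝ) τ, (∫ u, ‖K (s - u) (g u)‖ ∂μ) ≤ C * B := by
    intro s hs
    have h1 : (∫ u, ‖K (s - u) (g u)‖ ∂μ) ≤ ∫ u, C * ‖K (s - u)‖ ∂μ := by
      refine integral_mono_ae ((hslice s).norm) ?_ ?_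
      · have := ((hKs s).norm.const_mul C)
        rwa [intervalIntegrable_iff, Set.uIoc_of_le hτ] at this
      · refine (ae_restrict_iff' measurableSet_Ioc).2
          (Filter.Eventually.of_forall fun u hu => ?_)
        calc ‖K (s - u) (g u)‖ ≤ ‖K (s - u)‖ * ‖g u‖ := (K (s - u)).le_opNorm _
        _ ≤ ‖K (s - u)‖ * C :=
            mul_le_mul_of_nonneg_left (hC u ⟨hu.1.le, hu.2⟩) (norm_nonneg _)
        _ = C * ‖K (s - u)‖ := mul_comm _ _
    have h2 : (∫ u, ‖K (s - u)‖ ∂μ) ≤ B := by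
      have he : (∫ u, ‖K (s - u)‖ ∂μ) = ∫ u in (0:ℝ)..τ, ‖K (s - u)‖ := by
        rw [intervalIntegral.integral_of_le hτ]
      rw [he, intervalIntegral.integral_comp_sub_left (fun v => ‖K v‖) s]
      exact intervalIntegral.integral_mono_interval (by linarith [hs.1]) (by linarith [hs.2])
        (by linarith [hs.1, hs.2])
        (Filter.Eventually.of_forall fun v => norm_nonneg _) (hKnormint _ _)
    calc (∫ u, ‖K (s - u) (g u)‖ ∂μ) ≤ ∫ u, C * ‖K (s - u)‖ ∂μ := h1
    _ = C * ∫ u, ‖K (s - u)‖ ∂μ := integral_const_mul _ _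
    _ ≤ C * B := mul_le_mul_of_nonneg_left h2 hC0
  -- product integrability
  have hFi : Integrable (Function.uncurry fun s u => K (s - u) (g u)) (μ.prod μ) := by
    refine (integrable_prod_iff hFm.aestronglyMeasurable).2 ⟨?_, ?_⟩
    · exact Filter.Eventually.of_forall fun s => hslice s
    · refine (integrable_const (C * B)).mono'
        (hFm.norm.integral_prod_right'.aestronglyMeasurable) ?_
      refine (ae_restrict_iff' measurableSet_Ioc).2
        (Filter.Eventually.of_forall fun s hs => ?_)
      rw [Real.norm_eq_abs, abs_of_nonneg (integral_nonneg fun u => norm_nonneg _)]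
      exact hnormbd s hs
  -- now convert both sides and swap
  have hae0 : ∀ᵐ v : ℝ, v ≠ (0:ℝ) := by
    rw [ae_iff]
    simpa using Real.volume_singleton (a := 0)
  rw [intervalIntegral.integral_of_le hτ, intervalIntegral.integral_of_le hτ]
  have hL : ∀ s ∈ Set.Ioc (0:ℝ) τ,
      (∫ u in (0:ℝ)..s, K (s - u) (g u)) = ∫ u, K (s - u) (g u) ∂μ := by
    intro s hs
    have hON : IntegrableOn (fun u => K (s - u) (g u)) (Set.Ioc 0 τ) volume := hslice s
    rw [intervalIntegral.integral_of_le hs.1.le, hμ]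
    have hsplit2 : ∫ u in Set.Ioc (0:ℝ) τ, K (s - u) (g u) =
        (∫ u in Set.Ioc (0:ℝ) s, K (s - u) (g u)) + ∫ u in Set.Ioc s τ, K (s - u) (g u) := by
      rw [← setIntegral_union (Set.Ioc_disjoint_Ioc_of_le le_rfl) measurableSet_Ioc
        (hON.mono_set (Set.Ioc_subset_Ioc_right hs.2))
        (hON.mono_set (Set.Ioc_subset_Ioc_left hs.1.le)),
        Set.Ioc_union_Ioc_eq_Ioc hs.1.le hs.2]
    have hz2 : ∫ u in Set.Ioc s τ, K (s - u) (g u) = 0 :=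
      setIntegral_eq_zero_of_forall_eq_zero (fun u hu => by
        rw [hK0 (s - u) (by linarith [hu.1]), ContinuousLinearMap.zero_apply])
    rw [hsplit2, hz2, add_zero]
  rw [setIntegral_congr_fun measurableSet_Ioc hL, integral_integral_swap hFi]
  refine setIntegral_congr_fun measurableSet_Ioc fun u hu => ?_
  have hKu : Integrable (fun s => K (s - u)) μ := by
    have := (kint K hK0 hKi (-u) (τ - u)).comp_sub_right u
    exact (by simpa [intervalIntegrable_iff, Set.uIoc_of_le hτ] using this :
      IntegrableOn (fun s => K (s - u)) (Set.Ioc 0 τ) volume)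
  have happ : (∫ s, K (s - u) (g u) ∂μ) = (∫ s, K (s - u) ∂μ) (g u) :=
    (ContinuousLinearMap.integral_apply hKu (g u)).symm
  rw [happ]
  congr 1
  have h1 : (∫ s, K (s - u) ∂μ) = ∫ s in (0:ℝ)..τ, K (s - u) := by
    rw [intervalIntegral.integral_of_le hτ]
  rw [h1, intervalIntegral.integral_comp_sub_right K u]
  have hsplit : ∫ v in (0 - u : ℝ)..(τ - u), K v =
      (∫ v in (0 - u : ℝ)..(0:ℝ), K v) + ∫ v in (0:ℝ)..(τ - u), K v :=
    (intervalIntegral.integral_add_adjacent_intervals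
      (kint K hK0 hKi _ _) (kint K hK0 hKi _ _)).symm
  rw [hsplit]
  have hz : (∫ v in (0 - u : ℝ)..(0:ℝ), K v) = 0 := by
    rw [intervalIntegral.integral_congr_ae (g := fun _ => (0 : E →L[𝕜] E)) ?_,
      intervalIntegral.integral_zero]
    filter_upwards [hae0] with v hv hmem
    rw [Set.uIoc_of_le (by linarith [hu.1] : (0:ℝ) - u ≤ 0)] at hmem
    exact hK0 v (lt_of_le_of_ne hmem.2 hv)
  rw [hz, zero_add]

lemma primitive_zero (f : ℝ → E) (hf : ContinuousOn f (Set.Ici 0))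
    (hfi : ∀ t : ℝ, 0 ≤ t → IntervalIntegrable f volume 0 t)
    (h0 : ∀ t : ℝ, 0 ≤ t → (∫ s in (0:ℝ)..t, f s) = 0) :
    ∀ t : ℝ, 0 ≤ t → f t = 0 := by
  intro t₀ ht₀
  have hmeas : StronglyMeasurableAtFilter f (𝓝[Set.Ioi t₀] t₀) volume :=
    (hf.stronglyMeasurableAtFilter_nhdsWithin measurableSet_Ici t₀).filter_mono
      (nhdsWithin_mono _ (fun u hu => le_trans ht₀ (le_of_lt hu)))
  have hcont : ContinuousWithinAt f (Set.Ioi t₀) t₀ :=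
    (hf t₀ ht₀).mono (fun u hu => le_trans ht₀ (le_of_lt hu))
  have hd : derivWithin (fun u => ∫ x in (0:ℝ)..u, f x) (Set.Ici t₀) t₀ = f t₀ :=
    intervalIntegral.derivWithin_integral_right (hfi t₀ ht₀) hmeas hcont
      (uniqueDiffOn_Ici t₀ t₀ Set.self_mem_Ici)
  rw [← hd]
  have : derivWithin (fun u => ∫ x in (0:ℝ)..u, f x) (Set.Ici t₀) t₀ =
      derivWithin (fun _ : ℝ => (0:E)) (Set.Ici t₀) t₀ := by
    apply derivWithin_congr
    · intro u hu; exact h0 u (le_trans ht₀ hu)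
    · exact h0 t₀ ht₀
  rw [this]; simp

lemma convCont (K : ℝ → E →L[𝕜] E) (hKm : StronglyMeasurable K)
    (hKi : ∀ b : ℝ, IntegrableOn K (Set.Icc 0 b))
    (g : ℝ → E) (hg : Continuous g) :
    ContinuousOn (fun t => ∫ s in (0:ℝ)..t, K s (g (t - s))) (Set.Ici 0) := by
  intro t₀ ht₀
  have ht₀' : (0:ℝ) ≤ t₀ := ht₀
  set T := t₀ + 1 with hT
  obtain ⟨C, hC⟩ : ∃ C, ∀ v ∈ Set.Icc (-T) T, ‖g v‖ ≤ C :=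
    isCompact_Icc.exists_bound_of_continuousOn hg.continuousOn
  have hC0 : 0 ≤ C := le_trans (norm_nonneg _) (hC 0 ⟨by simp [hT]; linarith, by simp [hT]; linarith⟩)
  set μ := volume.restrict (Set.Ioc (0:ℝ) T) with hμ
  set F : ℝ → ℝ → E := fun t => (Set.Ioc (0:ℝ) t).indicator (fun s => K s (g (t - s))) with hF
  have hsm : ∀ t : ℝ, StronglyMeasurable (fun s => K s (g (t - s))) := fun t =>
    isBoundedBilinearMap_apply.continuous.comp_stronglyMeasurable
      (hKm.prodMk (hg.comp (continuous_const.sub continuous_id)).stronglyMeasurable)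
  have heq : ∀ t : ℝ, 0 ≤ t → t ≤ T →
      (∫ s in (0:ℝ)..t, K s (g (t - s))) = ∫ s, F t s ∂μ := by
    intro t h0 hle
    rw [intervalIntegral.integral_of_le h0, hμ, hF]
    rw [setIntegral_indicator measurableSet_Ioc,
      Set.inter_eq_self_of_subset_right (Set.Ioc_subset_Ioc_right hle)]
  have hev : ∀ᶠ t in 𝓝[Set.Ici 0] t₀, 0 ≤ t ∧ t ≤ T := by
    filter_upwards [self_mem_nhdsWithin,
      eventually_nhdsWithin_of_eventually_nhds
        (Filter.Tendsto.eventually_le_const (by linarith : t₀ < T) Filter.tendsto_id)] with t h1 h2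
    exact ⟨h1, h2⟩
  have key : Filter.Tendsto (fun t => ∫ s, F t s ∂μ) (𝓝[Set.Ici 0] t₀) (𝓝 (∫ s, F t₀ s ∂μ)) := by
    apply tendsto_integral_filter_of_dominated_convergence (fun s => ‖K s‖ * C)
    · exact Filter.Eventually.of_forall fun t =>
        ((hsm t).indicator measurableSet_Ioc).aestronglyMeasurable
    · filter_upwards [hev] with t ht
      refine (ae_restrict_iff' measurableSet_Ioc).2
        (Filter.Eventually.of_forall fun s hs => ?_)
      show ‖(Set.Ioc (0:ℝ) t).indicator (fun s => K s (g (t - s))) s‖ ≤ ‖K s‖ * C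
      by_cases hmem : s ∈ Set.Ioc 0 t
      · rw [Set.indicator_of_mem hmem]
        calc ‖K s (g (t - s))‖ ≤ ‖K s‖ * ‖g (t - s)‖ := (K s).le_opNorm _
        _ ≤ ‖K s‖ * C := mul_le_mul_of_nonneg_left
            (hC _ ⟨by linarith [hmem.2, hs.1], by linarith [hmem.1, ht.2]⟩) (norm_nonneg _)
      · rw [Set.indicator_of_notMem hmem, norm_zero]
        exact mul_nonneg (norm_nonneg _) hC0
    · exact (((hKi T).mono_set Set.Ioc_subset_Icc_self).norm.mul_const C)
    · have hne : ∀ᵐ s ∂μ, s ≠ t₀ := by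
        refine ae_restrict_of_ae ?_
        rw [ae_iff]; simpa using Real.volume_singleton (a := t₀)
      filter_upwards [hne, ae_restrict_mem measurableSet_Ioc] with s hs hsmem
      rcases lt_or_gt_of_ne hs with hlt | hgt
      · have hval : F t₀ s = K s (g (t₀ - s)) :=
          Set.indicator_of_mem (show s ∈ Set.Ioc (0:ℝ) t₀ from ⟨hsmem.1, hlt.le⟩) _
        rw [hval]
        have hcn : Filter.Tendsto (fun t => K s (g (t - s))) (𝓝[Set.Ici 0] t₀)
            (𝓝 (K s (g (t₀ - s)))) :=
          (((K s).continuous.comp (hg.comp (continuous_id.sub continuous_const))).tendsto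
            t₀).mono_left nhdsWithin_le_nhds
        refine hcn.congr' ?_
        filter_upwards [eventually_nhdsWithin_of_eventually_nhds
          (Filter.Tendsto.eventually_const_lt hlt Filter.tendsto_id)] with t hts
        exact (Set.indicator_of_mem (show s ∈ Set.Ioc (0:ℝ) t from ⟨hsmem.1, hts.le⟩)
          (fun u => K u (g (t - u)))).symm
      · have hval : F t₀ s = 0 := Set.indicator_of_notMem
          (show s ∉ Set.Ioc (0:ℝ) t₀ from fun h => absurd h.2 (not_le.2 hgt)) _
        rw [hval]
        have hcn : Filter.Tendsto (fun _ : ℝ => (0:E)) (𝓝[Set.Ici 0] t₀) (𝓝 (0:E)) :=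
          tendsto_const_nhds
        refine hcn.congr' ?_
        filter_upwards [eventually_nhdsWithin_of_eventually_nhds
          (Filter.Tendsto.eventually_lt_const hgt Filter.tendsto_id)] with t hts
        exact (Set.indicator_of_notMem
          (show s ∉ Set.Ioc (0:ℝ) t from fun h => absurd h.2 (not_le.2 hts))
          (fun u => K u (g (t - u)))).symm
  have hTle : t₀ ≤ T := by linarith
  rw [ContinuousWithinAt, heq t₀ ht₀' hTle]
  refine key.congr' ?_
  filter_upwards [hev] with t ht
  exact (heq t ht.1 ht.2).symm


end Aux

set_option maxHeartbeats 2000000 in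
/-- Variation of constants formula with trivial initial history: if `D` is a locally
integrable a.e. derivative of `X^L` on `[0,∞)` and `G` is continuous with `G(0) = 0`,
then `x(t) = G(t) + ∫_0^t D(t-u) G(u) du` (zero on `[-r,0)`) is the unique solution with
zero initial datum of the integral equation with forcing term `G`. -/
theorem stmt_10 {𝕜 : Type*} [RCLike 𝕜] {n : ℕ} (hn : 0 < n) {r : ℝ} (hr : 0 < r)
    (L : C(Set.Icc (-r) (0:ℝ), Fin n → 𝕜) →L[𝕜] (Fin n → 𝕜))
    (X : ℝ → ((Fin n → 𝕜) →L[𝕜] (Fin n → 𝕜))) (hX : IsPFMS r L X)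
    (D : ℝ → ((Fin n → 𝕜) →L[𝕜] (Fin n → 𝕜)))
    (hD : LocallyIntegrableOn D (Set.Ici (0:ℝ)))
    (hXD : ∀ t, 0 ≤ t → X t = 1 + ∫ s in (0:ℝ)..t, D s)
    (G : ℝ → Fin n → 𝕜) (hGc : ContinuousOn G (Set.Ici (0:ℝ))) (hG0 : G 0 = 0)
    (x : ℝ → Fin n → 𝕜)
    (hxneg : ∀ t ∈ Set.Ico (-r) (0:ℝ), x t = 0)
    (hxpos : ∀ t, 0 ≤ t → x t = G t + ∫ u in (0:ℝ)..t, D (t - u) (G u)) :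
    IsSolForced r L (fun _ => 0) 0 G x ∧
      ∀ x' : ℝ → Fin n → 𝕜, IsSolForced r L (fun _ => 0) 0 G x' →
        ∀ t, 0 ≤ t → x' t = x t := by
  classical
  -- measurable modification of D
  obtain ⟨D₀, hD₀sm, hD₀ae⟩ := hD.aestronglyMeasurable
  set Dm : ℝ → ((Fin n → 𝕜) →L[𝕜] (Fin n → 𝕜)) := (Set.Ici (0:ℝ)).indicator D₀ with hDmdef
  have hDmsm : StronglyMeasurable Dm := hD₀sm.indicator measurableSet_Ici
  have hDm0 : ∀ s : ℝ, s < 0 → Dm s = 0 := fun s hs =>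
    Set.indicator_of_notMem (by simpa using hs) _
  have hDae : ∀ᵐ s ∂volume, s ∈ Set.Ici (0:ℝ) → D s = Dm s := by
    rw [← ae_restrict_iff' measurableSet_Ici]
    filter_upwards [hD₀ae, ae_restrict_mem measurableSet_Ici] with s h1 h2
    rw [h1, hDmdef, Set.indicator_of_mem h2]
  have hDmi : ∀ b : ℝ, IntegrableOn Dm (Set.Icc 0 b) := by
    intro b
    have h1 : IntegrableOn D (Set.Icc 0 b) :=
      hD.integrableOn_compact_subset (fun s hs => hs.1) isCompact_Icc
    refine h1.congr_fun_ae ((ae_restrict_iff' measurableSet_Icc).2 ?_)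
    filter_upwards [hDae] with s h1 h2
    exact h1 h2.1
  -- continuous extensions
  set Gm : ℝ → (Fin n → 𝕜) := fun u => G (max u 0) with hGmdef
  have hGmc : Continuous Gm :=
    hGc.comp_continuous (continuous_id.max continuous_const) (fun u => Set.mem_Ici.mpr (le_max_right _ _))
  have hGm : ∀ u : ℝ, 0 ≤ u → Gm u = G u := fun u hu => by rw [hGmdef]; simp [max_eq_left hu]
  set Xm : ℝ → ((Fin n → 𝕜) →L[𝕜] (Fin n → 𝕜)) := fun s => X (max s 0) with hXmdef
  have hXmc : Continuous Xm :=
    hX.2.1.comp_continuous (continuous_id.max continuous_const) (fun u => Set.mem_Ici.mpr (le_max_right _ _))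
  have hXm : ∀ s : ℝ, 0 ≤ s → Xm s = X s := fun s hs => by rw [hXmdef]; simp [max_eq_left hs]
  set Xi : ℝ → ((Fin n → 𝕜) →L[𝕜] (Fin n → 𝕜)) := (Set.Ici (0:ℝ)).indicator Xm with hXidef
  have hXism : StronglyMeasurable Xi :=
    (hXmc.stronglyMeasurable).indicator measurableSet_Ici
  have hXi0 : ∀ s : ℝ, s < 0 → Xi s = 0 := fun s hs =>
    Set.indicator_of_notMem (by simpa using hs) _
  have hXi : ∀ s : ℝ, 0 ≤ s → Xi s = Xm s := fun s hs => Set.indicator_of_mem hs _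
  have hXii : ∀ b : ℝ, IntegrableOn Xi (Set.Icc 0 b) := by
    intro b
    exact (hXmc.continuousOn.integrableOn_Icc).congr_fun (fun s hs => (hXi s hs.1).symm)
      measurableSet_Icc
  -- x rewritten with Dm, Gm
  have hxpos' : ∀ t : ℝ, 0 ≤ t → x t = Gm t + ∫ u in (0:ℝ)..t, Dm (t - u) (Gm u) := by
    intro t ht
    rw [hxpos t ht, hGm t ht]
    congr 1
    apply intervalIntegral.integral_congr_ae
    have hsh : ∀ᵐ u : ℝ, (t - u ∈ Set.Ici (0:ℝ) → D (t - u) = Dm (t - u)) :=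
      (Measure.measurePreserving_sub_left volume t).quasiMeasurePreserving.ae hDae
    filter_upwards [hsh] with u hu hmem
    rw [Set.uIoc_of_le ht] at hmem
    rw [hu (by simp; linarith [hmem.2]), hGm u hmem.1.le]
  have hx0 : x 0 = 0 := by
    rw [hxpos 0 le_rfl, intervalIntegral.integral_same, hG0, add_zero]
  -- continuity of x on [0,∞)
  have hconveq : ∀ t : ℝ, (∫ s in (0:ℝ)..t, Dm s (Gm (t - s))) =
      ∫ u in (0:ℝ)..t, Dm (t - u) (Gm u) := by
    intro t
    have h := intervalIntegral.integral_comp_sub_left (a := (0:ℝ)) (b := t)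
      (fun v => Dm v (Gm (t - v))) t
    simp only [sub_sub_cancel, sub_zero, sub_self] at h
    rw [← h]
  have hconv : ContinuousOn (fun t => ∫ u in (0:ℝ)..t, Dm (t - u) (Gm u)) (Set.Ici (0:ℝ)) :=
    (convCont Dm hDmsm hDmi Gm hGmc).congr (fun t _ => (hconveq t).symm)
  have hxc : ContinuousOn x (Set.Ici (0:ℝ)) := by
    refine ((hGmc.continuousOn.add hconv).congr (fun t ht => ?_))
    exact hxpos' t ht
  -- primitive of x
  set xI : ℝ → (Fin n → 𝕜) := (Set.Ici (0:ℝ)).indicator x with hxIdef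
  have hxIint : ∀ a b : ℝ, IntervalIntegrable xI volume a b := by
    refine kint xI (fun s hs => Set.indicator_of_notMem (by simpa using hs) _) ?_
    intro b
    exact ((hxc.mono (Set.Icc_subset_Ici_self)).integrableOn_Icc).congr_fun
      (fun s hs => (Set.indicator_of_mem hs.1 _).symm) measurableSet_Icc
  set Y : ℝ → (Fin n → 𝕜) := fun b => ∫ s in (0:ℝ)..b, xI s with hYdef
  have hYc : Continuous Y := intervalIntegral.continuous_primitive hxIint 0
  have hYeq : ∀ s : ℝ, 0 ≤ s → Y s = ∫ σ in (0:ℝ)..s, x σ := by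
    intro s hs
    exact intervalIntegral.integral_congr (fun σ hσ => Set.indicator_of_mem
      (by rw [Set.uIcc_of_le hs] at hσ; exact hσ.1) _)
  have hY0 : ∀ b : ℝ, b ≤ 0 → Y b = 0 := by
    intro b hb
    show (∫ s in (0:ℝ)..b, xI s) = 0
    have : ∀ s ∈ Set.uIcc (0:ℝ) b, xI s = (fun _ => (0 : Fin n → 𝕜)) s := by
      intro s hs
      rw [Set.uIcc_of_ge hb] at hs
      rcases lt_or_ge s 0 with h0 | h0
      · exact Set.indicator_of_notMem (by simpa using h0) _
      · have : s = 0 := le_antisymm hs.2 h0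
        rw [this, hxIdef, Set.indicator_of_mem Set.self_mem_Ici, hx0]
    rw [intervalIntegral.integral_congr this, intervalIntegral.integral_zero]
  -- interval integrability of x on [0,t]
  have hxint : ∀ t : ℝ, 0 ≤ t → IntervalIntegrable x volume 0 t := fun t ht =>
    (hxc.mono (by rw [Set.uIcc_of_le ht]; exact fun s hs => hs.1)).intervalIntegrable
  -- step (F1): Y s = ∫_0^s Xm(s-u)(Gm u) du
  have hDDm : ∀ c : ℝ, 0 ≤ c → (∫ v in (0:ℝ)..c, D v) = ∫ v in (0:ℝ)..c, Dm v := by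
    intro c hc
    apply intervalIntegral.integral_congr_ae
    filter_upwards [hDae] with v hv hmem
    rw [Set.uIoc_of_le hc] at hmem
    exact hv hmem.1.le
  have hADc : Continuous (fun τ : ℝ => ∫ v in (0:ℝ)..τ, Dm v) :=
    intervalIntegral.continuous_primitive (kint Dm hDm0 hDmi) 0
  have hF1 : ∀ s : ℝ, 0 ≤ s → Y s = ∫ u in (0:ℝ)..s, Xm (s - u) (Gm u) := by
    intro s hs
    have e1 : Y s = ∫ σ in (0:ℝ)..s, (Gm σ + ∫ u in (0:ℝ)..σ, Dm (σ - u) (Gm u)) := by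
      rw [hYeq s hs]
      refine intervalIntegral.integral_congr (fun σ hσ => ?_)
      rw [Set.uIcc_of_le hs] at hσ
      exact hxpos' σ hσ.1
    have hinner_int : IntervalIntegrable (fun σ => ∫ u in (0:ℝ)..σ, Dm (σ - u) (Gm u))
        volume 0 s :=
      (hconv.mono (by rw [Set.uIcc_of_le hs]; exact fun σ hσ => hσ.1)).intervalIntegrable
    have e2 : Y s = (∫ σ in (0:ℝ)..s, Gm σ) +
        ∫ σ in (0:ℝ)..s, ∫ u in (0:ℝ)..σ, Dm (σ - u) (Gm u) := by
      rw [e1, intervalIntegral.integral_add (hGmc.intervalIntegrable _ _) hinner_int]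
    have e3 := fub Dm hDmsm hDm0 hDmi Gm hGmc hs
    have hcont2 : Continuous (fun u => (∫ v in (0:ℝ)..(s - u), Dm v) (Gm u)) :=
      (hADc.comp (continuous_const.sub continuous_id)).clm_apply hGmc
    have e4 : (∫ σ in (0:ℝ)..s, Gm σ) + (∫ u in (0:ℝ)..s, (∫ v in (0:ℝ)..(s - u), Dm v) (Gm u))
        = ∫ u in (0:ℝ)..s, (Gm u + (∫ v in (0:ℝ)..(s - u), Dm v) (Gm u)) :=
      (intervalIntegral.integral_add (hGmc.intervalIntegrable _ _)
        (hcont2.intervalIntegrable _ _)).symm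
    rw [e2, e3, e4]
    refine intervalIntegral.integral_congr (fun u hu => ?_)
    rw [Set.uIcc_of_le hs] at hu
    have hsu : 0 ≤ s - u := by linarith [hu.2]
    rw [hXm _ hsu, hXD _ hsu, hDDm _ hsu, ContinuousLinearMap.add_apply,
      ContinuousLinearMap.one_apply]
  -- the map Ψ : t ↦ (θ ↦ Y (t + θ)) as continuous family
  set ΨF : C(ℝ × (Set.Icc (-r) (0:ℝ)), Fin n → 𝕜) :=
    ⟨fun p => Y (p.1 + (p.2 : ℝ)), by fun_prop⟩ with hΨFdef
  set Ψ : C(ℝ, C(Set.Icc (-r) (0:ℝ), Fin n → 𝕜)) := ΨF.curry with hΨdef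
  have hΨapp : ∀ (t : ℝ) (θ : Set.Icc (-r) (0:ℝ)), Ψ t θ = Y (t + (θ:ℝ)) := fun t θ => rfl
  -- step (★): Y t = ∫_0^t Gm + L (Ψ-integrated)
  -- the A operator (primitive of Xm, cut at 0)
  set A : ℝ → ((Fin n → 𝕜) →L[𝕜] (Fin n → 𝕜)) := fun τ => ∫ v in (0:ℝ)..(max τ 0), Xm v
    with hAdef
  have hAc : Continuous A :=
    (intervalIntegral.continuous_primitive (fun a b => hXmc.intervalIntegrable a b) 0).comp
      (continuous_id.max continuous_const)
  have hA0 : ∀ τ : ℝ, τ ≤ 0 → A τ = 0 := by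
    intro τ hτ
    show (∫ v in (0:ℝ)..(max τ 0), Xm v) = 0
    rw [max_eq_right hτ, intervalIntegral.integral_same]
  -- Θ value computation, combined statement
  have hstar : ∀ t : ℝ, 0 ≤ t →
      Y t = (∫ u in (0:ℝ)..t, Gm u) + L (∫ u in (0:ℝ)..t, Ψ u) := by
    intro t ht
    set χF : C(ℝ × (Set.Icc (-r) (0:ℝ)), Fin n → 𝕜) :=
      ⟨fun p => A (t - p.1 + (p.2 : ℝ)) (Gm p.1), by
        exact ((hAc.comp (by fun_prop)).clm_apply (hGmc.comp continuous_fst))⟩ with hχFdef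
    set χ := χF.curry with hχdef
    have hχapp : ∀ (u : ℝ) (θ : Set.Icc (-r) (0:ℝ)), χ u θ = A (t - u + (θ:ℝ)) (Gm u) :=
      fun u θ => rfl
    have hχcont : Continuous (fun u : ℝ => χ u) := χ.continuous
    -- relation from the PFMS property
    have hLχ : ∀ u ∈ Set.Icc (0:ℝ) t, Xm (t - u) (Gm u) = Gm u + L (χ u) := by
      intro u hu
      have htu : 0 ≤ t - u := by linarith [hu.2]
      obtain ⟨ψ, hψ1, hψ2⟩ := hX.2.2.2 (G u) (t - u) htu
      have hψχ : ψ = χ u := by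
        refine ContinuousMap.ext fun θ => ?_
        rw [hψ1 θ, hχapp]
        have hc : (0:ℝ) ≤ max ((t - u) + (θ:ℝ)) 0 := le_max_right _ _
        have h1 : (∫ s in (0:ℝ)..(max ((t - u) + (θ:ℝ)) 0), X s (G u)) =
            ∫ s in (0:ℝ)..(max ((t - u) + (θ:ℝ)) 0), Xm s (G u) := by
          refine intervalIntegral.integral_congr (fun s hs => ?_)
          rw [Set.uIcc_of_le hc] at hs
          rw [hXm s hs.1]
        rw [h1, ← ContinuousLinearMap.intervalIntegral_apply
          (hXmc.intervalIntegrable _ _) (G u), hGm u hu.1]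
      rw [hψχ] at hψ2
      rw [hXm _ htu, hGm u hu.1]
      exact hψ2
    -- integrate the relation over [0,t]
    have hXmGc : Continuous (fun u : ℝ => Xm (t - u) (Gm u)) :=
      (hXmc.comp (continuous_const.sub continuous_id)).clm_apply hGmc
    have hint2 : (∫ u in (0:ℝ)..t, (Xm (t - u) (Gm u) - Gm u)) =
        ∫ u in (0:ℝ)..t, L (χ u) := by
      refine intervalIntegral.integral_congr (fun u hu => ?_)
      rw [Set.uIcc_of_le ht] at hu
      rw [hLχ u hu]
      abel
    have hsub : (∫ u in (0:ℝ)..t, (Xm (t - u) (Gm u) - Gm u)) =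
        (∫ u in (0:ℝ)..t, Xm (t - u) (Gm u)) - ∫ u in (0:ℝ)..t, Gm u :=
      intervalIntegral.integral_sub (hXmGc.intervalIntegrable _ _)
        (hGmc.intervalIntegrable _ _)
    have hint1 : (∫ u in (0:ℝ)..t, L (χ u)) = L (∫ u in (0:ℝ)..t, χ u) :=
      L.intervalIntegral_comp_comm (hχcont.intervalIntegrable _ _)
    -- identify ∫ χ with ∫ Ψ via pointwise values
    have hΘeq : (∫ u in (0:ℝ)..t, χ u) = ∫ u in (0:ℝ)..t, Ψ u := by
      refine ContinuousMap.ext fun θ => ?_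
      have hθ2 : (θ:ℝ) ≤ 0 := θ.2.2
      set m : ℝ := max (t + (θ:ℝ)) 0 with hmdef
      have hm0 : (0:ℝ) ≤ m := le_max_right _ _
      have hmt : m ≤ t := max_le (by linarith) ht
      have hev1 : (∫ u in (0:ℝ)..t, χ u) θ = ∫ u in (0:ℝ)..t, χ u θ :=
        ((ContinuousMap.evalCLM 𝕜 θ).intervalIntegral_comp_comm
          (hχcont.intervalIntegrable _ _)).symm
      have hev2 : (∫ u in (0:ℝ)..t, Ψ u) θ = ∫ u in (0:ℝ)..t, Ψ u θ :=
        ((ContinuousMap.evalCLM 𝕜 θ).intervalIntegral_comp_comm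
          (Ψ.continuous.intervalIntegrable _ _)).symm
      rw [hev1, hev2]
      -- left side equals ∫_0^m Y
      have hAcontu : Continuous (fun u : ℝ => A (t - u + (θ:ℝ)) (Gm u)) :=
        ((hAc.comp (by fun_prop)).clm_apply hGmc)
      have hleft : (∫ u in (0:ℝ)..t, χ u θ) = ∫ σ in (0:ℝ)..m, Y σ := by
        simp only [hχapp]
        rcases le_or_gt 0 (t + (θ:ℝ)) with hc | hc
        · have hmeq : m = t + (θ:ℝ) := max_eq_left hc
          have hsplit : (∫ u in (0:ℝ)..m, A (t - u + (θ:ℝ)) (Gm u)) +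
              (∫ u in m..t, A (t - u + (θ:ℝ)) (Gm u)) =
              ∫ u in (0:ℝ)..t, A (t - u + (θ:ℝ)) (Gm u) :=
            intervalIntegral.integral_add_adjacent_intervals
              (hAcontu.intervalIntegrable _ _) (hAcontu.intervalIntegrable _ _)
          have hz : (∫ u in m..t, A (t - u + (θ:ℝ)) (Gm u)) = 0 := by
            have : ∀ u ∈ Set.uIcc m t, A (t - u + (θ:ℝ)) (Gm u) =
                (fun _ => (0 : Fin n → 𝕜)) u := by
              intro u hu
              rw [Set.uIcc_of_le hmt] at hu
              rw [hA0 (t - u + (θ:ℝ)) (by rw [hmeq] at hu; linarith [hu.1]),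
                ContinuousLinearMap.zero_apply]
            rw [intervalIntegral.integral_congr this, intervalIntegral.integral_zero]
          have hmain : (∫ u in (0:ℝ)..m, A (t - u + (θ:ℝ)) (Gm u)) =
              ∫ u in (0:ℝ)..m, (∫ v in (0:ℝ)..(m - u), Xi v) (Gm u) := by
            refine intervalIntegral.integral_congr (fun u hu => ?_)
            rw [Set.uIcc_of_le hm0] at hu
            have hmu : (0:ℝ) ≤ m - u := by linarith [hu.2]
            have e1 : t - u + (θ:ℝ) = m - u := by rw [hmeq]; ring
            rw [e1]
            show (∫ v in (0:ℝ)..(max (m - u) 0), Xm v) (Gm u) = _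
            rw [max_eq_left hmu]
            congr 1
            refine intervalIntegral.integral_congr (fun v hv => ?_)
            rw [Set.uIcc_of_le hmu] at hv
            rw [hXi v hv.1]
          have hfub := fub Xi hXism hXi0 hXii Gm hGmc hm0
          have hYid : (∫ σ in (0:ℝ)..m, ∫ u in (0:ℝ)..σ, Xi (σ - u) (Gm u)) =
              ∫ σ in (0:ℝ)..m, Y σ := by
            refine intervalIntegral.integral_congr (fun σ hσ => ?_)
            rw [Set.uIcc_of_le hm0] at hσ
            rw [hF1 σ hσ.1]
            refine intervalIntegral.integral_congr (fun u hu => ?_)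
            rw [Set.uIcc_of_le hσ.1] at hu
            rw [hXi _ (by linarith [hu.2])]
          rw [← hsplit, hz, add_zero, hmain, ← hfub, hYid]
        · -- t + θ < 0 : everything vanishes
          have hmeq : m = 0 := max_eq_right hc.le
          have : ∀ u ∈ Set.uIcc (0:ℝ) t, A (t - u + (θ:ℝ)) (Gm u) =
              (fun _ => (0 : Fin n → 𝕜)) u := by
            intro u hu
            rw [Set.uIcc_of_le ht] at hu
            rw [hA0 (t - u + (θ:ℝ)) (by linarith [hu.1]), ContinuousLinearMap.zero_apply]
          rw [intervalIntegral.integral_congr this, intervalIntegral.integral_zero, hmeq,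
            intervalIntegral.integral_same]
      -- right side equals ∫_0^m Y as well
      have hright : (∫ u in (0:ℝ)..t, Ψ u θ) = ∫ σ in (0:ℝ)..m, Y σ := by
        simp only [hΨapp]
        have hcomp := intervalIntegral.integral_comp_add_right (a := (0:ℝ)) (b := t)
          Y (θ:ℝ)
        rw [hcomp, zero_add]
        have hsplit : (∫ σ in (θ:ℝ)..(0:ℝ), Y σ) + (∫ σ in (0:ℝ)..(t + (θ:ℝ)), Y σ) =
            ∫ σ in (θ:ℝ)..(t + (θ:ℝ)), Y σ :=
          intervalIntegral.integral_add_adjacent_intervals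
            (hYc.intervalIntegrable _ _) (hYc.intervalIntegrable _ _)
        have hz1 : (∫ σ in (θ:ℝ)..(0:ℝ), Y σ) = 0 := by
          have : ∀ σ ∈ Set.uIcc (θ:ℝ) (0:ℝ), Y σ = (fun _ => (0 : Fin n → 𝕜)) σ := by
            intro σ hσ
            rw [Set.uIcc_of_le hθ2] at hσ
            exact hY0 σ hσ.2
          rw [intervalIntegral.integral_congr this, intervalIntegral.integral_zero]
        rcases le_or_gt 0 (t + (θ:ℝ)) with hc | hc
        · rw [← hsplit, hz1, zero_add, hmdef, max_eq_left hc]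
        · have hz2 : (∫ σ in (0:ℝ)..(t + (θ:ℝ)), Y σ) = 0 := by
            have : ∀ σ ∈ Set.uIcc (0:ℝ) (t + (θ:ℝ)), Y σ = (fun _ => (0 : Fin n → 𝕜)) σ := by
              intro σ hσ
              rw [Set.uIcc_of_ge hc.le] at hσ
              exact hY0 σ hσ.2
            rw [intervalIntegral.integral_congr this, intervalIntegral.integral_zero]
          rw [← hsplit, hz1, hz2, zero_add, hmdef, max_eq_right hc.le,
            intervalIntegral.integral_same]
      rw [hleft, hright]
    -- conclude
    have hXmG : (∫ u in (0:ℝ)..t, Xm (t - u) (Gm u)) = Y t := (hF1 t ht).symm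
    calc Y t = (∫ u in (0:ℝ)..t, Xm (t - u) (Gm u)) - (∫ u in (0:ℝ)..t, Gm u)
        + ∫ u in (0:ℝ)..t, Gm u := by rw [hXmG]; abel
    _ = (∫ u in (0:ℝ)..t, Gm u) + L (∫ u in (0:ℝ)..t, Ψ u) := by
        rw [← hsub, hint2, hint1, hΘeq]; abel
  -- z and equality of primitives
  set z : ℝ → (Fin n → 𝕜) := fun t => Gm t + L (Ψ t) with hzdef
  have hzc : Continuous z := hGmc.add (L.continuous.comp Ψ.continuous)
  have hprim : ∀ t : ℝ, 0 ≤ t → (∫ s in (0:ℝ)..t, z s) = Y t := by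
    intro t ht
    have h1 : (∫ s in (0:ℝ)..t, z s) =
        (∫ s in (0:ℝ)..t, Gm s) + ∫ s in (0:ℝ)..t, L (Ψ s) := by
      exact intervalIntegral.integral_add (hGmc.intervalIntegrable _ _)
        ((L.continuous.comp Ψ.continuous).intervalIntegrable _ _)
    rw [h1, L.intervalIntegral_comp_comm (Ψ.continuous.intervalIntegrable _ _),
      ← hstar t ht]
  have hxz : ∀ t : ℝ, 0 ≤ t → x t = z t := by
    intro t ht
    have := primitive_zero (fun s => x s - z s) (hxc.sub hzc.continuousOn)
      (fun τ hτ => (hxint τ hτ).sub (hzc.intervalIntegrable _ _)) (fun τ hτ => ?_) t ht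
    · exact sub_eq_zero.mp this
    · rw [intervalIntegral.integral_sub (hxint τ hτ) (hzc.intervalIntegrable _ _),
        hprim τ hτ, ← hYeq τ hτ, sub_self]
  -- the ψ for x at time t is Ψ t
  -- x vanishes on [θ, 0]
  have hxzero : ∀ θ : Set.Icc (-r) (0:ℝ), ∀ s : ℝ, (θ:ℝ) ≤ s → s ≤ 0 → x s = 0 := by
    intro θ s h1 h2
    rcases lt_or_ge s 0 with h3 | h3
    · exact hxneg s ⟨le_trans θ.2.1 h1, h3⟩
    · have : s = 0 := le_antisymm h2 h3
      rw [this, hx0]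
  have hxhistInt : ∀ θ : Set.Icc (-r) (0:ℝ), IntervalIntegrable x volume (θ:ℝ) 0 := by
    intro θ
    rw [intervalIntegrable_iff]
    have hz : IntegrableOn (fun _ : ℝ => (0 : Fin n → 𝕜)) (Set.uIoc (θ:ℝ) 0) volume :=
      integrableOn_zero
    refine hz.congr_fun (fun s hs => ?_) measurableSet_uIoc
    rw [Set.uIoc_of_le θ.2.2] at hs
    exact (hxzero θ s hs.1.le hs.2).symm
  have hψx : ∀ t : ℝ, 0 ≤ t → ∀ θ : Set.Icc (-r) (0:ℝ),
      Ψ t θ = ∫ s in (θ:ℝ)..(t + (θ:ℝ)), x s := by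
    intro t ht θ
    rw [hΨapp]
    have hθ2 : (θ:ℝ) ≤ 0 := θ.2.2
    rcases le_or_gt 0 (t + (θ:ℝ)) with hc | hc
    · have hsplit : (∫ s in (θ:ℝ)..(0:ℝ), x s) + (∫ s in (0:ℝ)..(t + (θ:ℝ)), x s) =
          ∫ s in (θ:ℝ)..(t + (θ:ℝ)), x s :=
        intervalIntegral.integral_add_adjacent_intervals (hxhistInt θ) (hxint _ hc)
      have hz1 : (∫ s in (θ:ℝ)..(0:ℝ), x s) = 0 := by
        have : ∀ s ∈ Set.uIcc (θ:ℝ) (0:ℝ), x s = (fun _ => (0 : Fin n → 𝕜)) s := by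
          intro s hs
          rw [Set.uIcc_of_le hθ2] at hs
          exact hxzero θ s hs.1 hs.2
        rw [intervalIntegral.integral_congr this, intervalIntegral.integral_zero]
      rw [← hsplit, hz1, zero_add, hYeq _ hc]
    · have hz : (∫ s in (θ:ℝ)..(t + (θ:ℝ)), x s) = 0 := by
        have : ∀ s ∈ Set.uIcc (θ:ℝ) (t + (θ:ℝ)), x s = (fun _ => (0 : Fin n → 𝕜)) s := by
          intro s hs
          rw [Set.uIcc_of_le (by linarith : (θ:ℝ) ≤ t + (θ:ℝ))] at hs
          exact hxzero θ s hs.1 (by linarith [hs.2])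
        rw [intervalIntegral.integral_congr this, intervalIntegral.integral_zero]
      rw [hz, hY0 _ hc.le]
  have hsol : IsSolForced r L (fun _ => 0) 0 G x := by
    refine ⟨fun θ hθ => hxneg θ hθ, hx0, hxc, fun t ht => ⟨Ψ t, hψx t ht, ?_⟩⟩
    rw [hxz t ht, hzdef]
    simp only [zero_add]
    rw [hGm t ht]
    exact add_comm _ _
  refine ⟨hsol, ?_⟩
  -- uniqueness via Gronwall
  intro x' hsol' t₀ ht₀
  set w : ℝ → Fin n → 𝕜 := fun s => x' s - x s with hwdef
  have hwc : ContinuousOn w (Set.Ici (0:ℝ)) := hsol'.2.2.1.sub hxc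
  have hw0 : w 0 = 0 := by
    show x' 0 - x 0 = 0
    rw [hsol'.2.1, hx0, sub_zero]
  have hwneg : ∀ s ∈ Set.Ico (-r) (0:ℝ), w s = 0 := by
    intro s hs
    show x' s - x s = 0
    rw [hsol'.1 s hs, hxneg s hs, sub_zero]
  have hwzero : ∀ θ : Set.Icc (-r) (0:ℝ), ∀ s : ℝ, (θ:ℝ) ≤ s → s ≤ 0 → w s = 0 := by
    intro θ s h1 h2
    rcases lt_or_ge s 0 with h3 | h3
    · exact hwneg s ⟨le_trans θ.2.1 h1, h3⟩
    · rw [le_antisymm h2 h3, hw0]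
  set wn : ℝ → ℝ := fun s => ‖w (max s 0)‖ with hwndef
  have hwnc : Continuous wn :=
    (hwc.comp_continuous (continuous_id.max continuous_const)
      (fun u => Set.mem_Ici.mpr (le_max_right _ _))).norm
  have hwneq : ∀ s : ℝ, 0 ≤ s → wn s = ‖w s‖ := fun s hs => by
    rw [hwndef]; simp [max_eq_left hs]
  have hwnnn : ∀ s : ℝ, 0 ≤ wn s := fun s => norm_nonneg _
  set f : ℝ → ℝ := fun t => ∫ s in (0:ℝ)..t, wn s with hfdef
  have hfc : Continuous f :=
    intervalIntegral.continuous_primitive (fun a b => hwnc.intervalIntegrable a b) 0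
  have hfnn : ∀ t : ℝ, 0 ≤ t → 0 ≤ f t := fun t ht =>
    intervalIntegral.integral_nonneg ht (fun s _ => hwnnn s)
  -- interval integrability of w-type functions on history intervals
  have hwhistInt : ∀ (y : ℝ → Fin n → 𝕜), (∀ s ∈ Set.Ico (-r) (0:ℝ), y s = 0) → y 0 = 0 →
      ∀ θ : Set.Icc (-r) (0:ℝ), IntervalIntegrable y volume (θ:ℝ) 0 := by
    intro y hyneg hy0 θ
    rw [intervalIntegrable_iff]
    have hz : IntegrableOn (fun _ : ℝ => (0 : Fin n → 𝕜)) (Set.uIoc (θ:ℝ) 0) volume :=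
      integrableOn_zero
    refine hz.congr_fun (fun s hs => ?_) measurableSet_uIoc
    rw [Set.uIoc_of_le θ.2.2] at hs
    rcases lt_or_ge s 0 with h3 | h3
    · exact (hyneg s ⟨le_trans θ.2.1 hs.1.le, h3⟩).symm
    · rw [le_antisymm hs.2 h3, hy0]
  -- reduction of sliding-window integrals
  have hwin : ∀ (y : ℝ → Fin n → 𝕜), (∀ s ∈ Set.Ico (-r) (0:ℝ), y s = 0) → y 0 = 0 →
      ContinuousOn y (Set.Ici (0:ℝ)) → ∀ (θ : Set.Icc (-r) (0:ℝ)) (t : ℝ), 0 ≤ t →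
      (∫ s in (θ:ℝ)..(t + (θ:ℝ)), y s) = ∫ s in (0:ℝ)..(max (t + (θ:ℝ)) 0), y s := by
    intro y hyneg hy0 hyc θ t ht
    have hyzero : ∀ s : ℝ, (θ:ℝ) ≤ s → s ≤ 0 → y s = 0 := by
      intro s h1 h2
      rcases lt_or_ge s 0 with h3 | h3
      · exact hyneg s ⟨le_trans θ.2.1 h1, h3⟩
      · rw [le_antisymm h2 h3, hy0]
    have hz1 : (∫ s in (θ:ℝ)..(0:ℝ), y s) = 0 := by
      have : ∀ s ∈ Set.uIcc (θ:ℝ) (0:ℝ), y s = (fun _ => (0 : Fin n → 𝕜)) s := by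
        intro s hs
        rw [Set.uIcc_of_le θ.2.2] at hs
        exact hyzero s hs.1 hs.2
      rw [intervalIntegral.integral_congr this, intervalIntegral.integral_zero]
    rcases le_or_gt 0 (t + (θ:ℝ)) with hc | hc
    · have hyint : IntervalIntegrable y volume 0 (t + (θ:ℝ)) :=
        (hyc.mono (by rw [Set.uIcc_of_le hc]; exact fun s hs => hs.1)).intervalIntegrable
      have hsplit : (∫ s in (θ:ℝ)..(0:ℝ), y s) + (∫ s in (0:ℝ)..(t + (θ:ℝ)), y s) =
          ∫ s in (θ:ℝ)..(t + (θ:ℝ)), y s :=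
        intervalIntegral.integral_add_adjacent_intervals (hwhistInt y hyneg hy0 θ) hyint
      rw [← hsplit, hz1, zero_add, max_eq_left hc]
    · have hz2 : (∫ s in (θ:ℝ)..(t + (θ:ℝ)), y s) = 0 := by
        have : ∀ s ∈ Set.uIcc (θ:ℝ) (t + (θ:ℝ)), y s = (fun _ => (0 : Fin n → 𝕜)) s := by
          intro s hs
          rw [Set.uIcc_of_le (by linarith : (θ:ℝ) ≤ t + (θ:ℝ))] at hs
          exact hyzero s hs.1 (by linarith [hs.2])
        rw [intervalIntegral.integral_congr this, intervalIntegral.integral_zero]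
      rw [hz2, max_eq_right hc.le, intervalIntegral.integral_same]
  -- key Gronwall-type bound
  have hkey : ∀ t : ℝ, 0 ≤ t → ‖w t‖ ≤ ‖L‖ * f t := by
    intro t ht
    obtain ⟨ψ', hψ'1, hψ'2⟩ := hsol'.2.2.2 t ht
    obtain ⟨ψ, hψ1, hψ2⟩ := hsol.2.2.2 t ht
    have hwt : w t = L (ψ' - ψ) := by
      show x' t - x t = L (ψ' - ψ)
      rw [hψ'2, hψ2, map_sub]
      abel
    rw [hwt]
    calc ‖L (ψ' - ψ)‖ ≤ ‖L‖ * ‖ψ' - ψ‖ := L.le_opNorm _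
    _ ≤ ‖L‖ * f t := by
        refine mul_le_mul_of_nonneg_left ?_ (norm_nonneg L)
        rw [ContinuousMap.norm_le _ (hfnn t ht)]
        intro θ
        rw [ContinuousMap.sub_apply, hψ'1 θ, hψ1 θ]
        set m : ℝ := max (t + (θ:ℝ)) 0 with hmdef
        have hm0 : (0:ℝ) ≤ m := le_max_right _ _
        have hmt : m ≤ t := max_le (by linarith [θ.2.2]) ht
        rw [hwin x' hsol'.1 hsol'.2.1 hsol'.2.2.1 θ t ht,
          hwin x hxneg hx0 hxc θ t ht]
        have hx'int : IntervalIntegrable x' volume 0 m :=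
          (hsol'.2.2.1.mono (by rw [Set.uIcc_of_le hm0]; exact fun s hs => hs.1)).intervalIntegrable
        have hxintm : IntervalIntegrable x volume 0 m := hxint m hm0
        rw [← intervalIntegral.integral_sub hx'int hxintm]
        calc ‖∫ s in (0:ℝ)..m, (x' s - x s)‖ ≤ ∫ s in (0:ℝ)..m, ‖x' s - x s‖ :=
          intervalIntegral.norm_integral_le_integral_norm hm0
        _ = ∫ s in (0:ℝ)..m, wn s := by
            refine intervalIntegral.integral_congr (fun s hs => ?_)
            rw [Set.uIcc_of_le hm0] at hs
            exact (hwneq s hs.1).symm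
        _ ≤ f t := by
            refine intervalIntegral.integral_mono_interval le_rfl hm0 hmt
              ((ae_restrict_iff' measurableSet_Ioc).2
                (Filter.Eventually.of_forall fun s _ => hwnnn s))
              (hwnc.intervalIntegrable _ _)
  -- Gronwall
  set b : ℝ := t₀ + 1 with hbdef
  have hgron := norm_le_gronwallBound_of_norm_deriv_right_le (f := f) (f' := wn)
    (δ := 0) (K := ‖L‖) (ε := 0) (a := 0) (b := b)
    hfc.continuousOn
    (fun t ht => intervalIntegral.integral_hasDerivWithinAt_right
      (hwnc.intervalIntegrable _ _)
      (hwnc.stronglyMeasurableAtFilter _ _)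
      hwnc.continuousWithinAt)
    (by simp [hfdef])
    (fun t ht => by
      have h1 : ‖wn t‖ = ‖w t‖ := by
        rw [Real.norm_eq_abs, abs_of_nonneg (hwnnn t), hwneq t ht.1]
      have h2 : ‖f t‖ = f t := by
        rw [Real.norm_eq_abs, abs_of_nonneg (hfnn t ht.1)]
      rw [h1, h2, add_zero]
      exact hkey t ht.1)
  have hft₀ : ‖f t₀‖ ≤ 0 := by
    have := hgron t₀ ⟨ht₀, by linarith⟩
    rwa [gronwallBound_ε0, zero_mul] at this
  have hf0 : f t₀ = 0 := by
    have h2 : ‖f t₀‖ = f t₀ := by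
      rw [Real.norm_eq_abs, abs_of_nonneg (hfnn t₀ ht₀)]
    linarith [hfnn t₀ ht₀, h2 ▸ hft₀]
  have : ‖w t₀‖ ≤ 0 := by
    have := hkey t₀ ht₀
    rwa [hf0, mul_zero] at this
  have hw : w t₀ = 0 := norm_le_zero_iff.mp this
  exact sub_eq_zero.mp hw
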